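/- Fix a grid 0 = t_0 < t_1 < ⋯ < t_m = 1 with Δt_i := t_i − t_{i−1}, and let 0 ≤ δ < δ'; set t_i^δ := (1+δ)·t_i and t_i^{δ'} := (1+δ')·t_i. Given any function ω : [0, 1+δ] → ℝ^d, define ω^{δ',δ} : [0, 1+δ'] → ℝ^d by ω^{δ',δ}(t) := ω( (t − t_i^{δ'} + t_i^δ) ∧ t_{i+1}^δ ) for t ∈ [t_i^{δ'}, t_{i+1}^{δ'}], i = 0, …, m−1. Set ε_i := ((δ' − δ)/(1 + δ'))·Δt_i for i = 1, …, m; then 0 ≤ ε_i < Δt_i, and for every t ∈ [0,1] one has ω^{δ',δ}((1+δ')·t) = ω( (1+δ)·b_ε(t) ), where b_ε is the backward function associated with the grid (t_i)_{0≤i≤m} and the shifts ε. -/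

import Mathlib

/-!
On each grid interval `(t_{i-1}, t_i]` the backward function `b_ε` is affine with slope
`Δt_i / (Δt_i - ε_i) = (1 + δ') / (1 + δ)`, clipped at `t_i`. Multiplying by `1 + δ` turns
`(1 + δ) b_ε(t)` into `min ((1 + δ) t_{i-1} + (1 + δ') (t - t_{i-1})) ((1 + δ) t_i)`, which is
exactly the argument at which `ω^{δ',δ}((1 + δ') t)` evaluates `ω`.
-/

open Set

theorem Fin.exists_mem_Ioc_of_lt_of_le {α : Type*} [LinearOrder α] :
    ∀ {m : ℕ} (t : Fin (m + 1) → α) {s : α}, t 0 < s → s ≤ t (Fin.last m) →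
      ∃ i : Fin m, s ∈ Ioc (t i.castSucc) (t i.succ)
  | 0, _, _, h0, hm => absurd hm (not_le.mpr h0)
  | m + 1, t, s, h0, hm => by
    by_cases hs : s ≤ t (Fin.last m).castSucc
    · obtain ⟨i, hi⟩ := Fin.exists_mem_Ioc_of_lt_of_le (fun j => t j.castSucc) h0 hs
      exact ⟨i.castSucc, hi⟩
    · exact ⟨Fin.last m, not_le.mp hs, hm⟩

theorem rescaled_shift_mem_Ico {δ δ' x : ℝ} (hδ : -1 < δ) (hδδ' : δ < δ') (hx : 0 < x) :
    (δ' - δ) / (1 + δ') * x ∈ Ico 0 x := by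
  have hq : 0 < 1 + δ' := by linarith
  exact ⟨mul_nonneg (div_nonneg (by linarith) hq.le) hx.le,
    mul_lt_of_lt_one_left hx ((div_lt_one hq).mpr (by linarith))⟩

theorem div_sub_rescaled_mul_self {δ δ' x : ℝ} (hx : x ≠ 0) (hδ : 1 + δ ≠ 0) (hδ' : 1 + δ' ≠ 0) :
    x / (x - (δ' - δ) / (1 + δ') * x) = (1 + δ') / (1 + δ) := by
  have hden : x - (δ' - δ) / (1 + δ') * x = x * (1 + δ) / (1 + δ') := by
    field_simp
    ring
  rw [hden]
  field_simp

theorem min_shift_eq_mul_sub_max {p q a a' s : ℝ} (hp : 0 < p) :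
    min (q * s - q * a + p * a) (p * a') = p * (a' - max ((a' - a) - q / p * (s - a)) 0) := by
  rw [mul_sub, mul_max_of_nonneg _ _ hp.le, mul_zero, ← min_sub_sub_left, sub_zero]
  congr 1
  field_simp
  ring

/-- The rescaled extension `ω^{δ',δ}` of a path `ω : [0,1+δ] → ℝ^d` to `[0,1+δ']`
is a backward time-change of `ω` : with `ε_i = ((δ'−δ)/(1+δ'))·Δt_i` one has
`0 ≤ ε_i < Δt_i` and `ω^{δ',δ}((1+δ')·t) = ω((1+δ)·b_ε(t))` for all `t ∈ [0,1]`,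
where `b_ε` is the backward function for the grid `(t_i)` and shifts `ε`. -/
theorem stmt12 {d : ℕ} (m : ℕ) (t : Fin (m + 1) → ℝ) (ht0 : t 0 = 0)
    (htm : t (Fin.last m) = 1) (hmono : StrictMono t)
    (δ δ' : ℝ) (hδ : 0 ≤ δ) (hδδ' : δ < δ')
    (ω ωext : ℝ → EuclideanSpace ℝ (Fin d))
    (hωext : ∀ i : Fin m, ∀ s ∈ Set.Icc ((1 + δ') * t i.castSucc) ((1 + δ') * t i.succ),
      ωext s = ω (min (s - (1 + δ') * t i.castSucc + (1 + δ) * t i.castSucc)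
        ((1 + δ) * t i.succ)))
    (b : ℝ → ℝ) (hb0 : b 0 = 0)
    (hb : ∀ i : Fin m, ∀ s ∈ Set.Ioc (t i.castSucc) (t i.succ),
      b s = t i.succ - max ((t i.succ - t i.castSucc) -
        ((t i.succ - t i.castSucc) /
            ((t i.succ - t i.castSucc) - ((δ' - δ) / (1 + δ')) * (t i.succ - t i.castSucc))) *
          (s - t i.castSucc)) 0) :
    (∀ i : Fin m, 0 ≤ ((δ' - δ) / (1 + δ')) * (t i.succ - t i.castSucc) ∧
        ((δ' - δ) / (1 + δ')) * (t i.succ - t i.castSucc) < t i.succ - t i.castSucc) ∧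
      ∀ s ∈ Set.Icc (0 : ℝ) 1, ωext ((1 + δ') * s) = ω ((1 + δ) * b s) := by
  have hΔ (i : Fin m) : 0 < t i.succ - t i.castSucc := sub_pos.mpr (hmono i.castSucc_lt_succ)
  have hp : 0 < 1 + δ := by linarith
  have hq : 0 < 1 + δ' := by linarith
  refine ⟨fun i => rescaled_shift_mem_Ico (by linarith) hδδ' (hΔ i), fun s hs => ?_⟩
  rcases hs.1.eq_or_lt with rfl | hpos
  · have hm : 0 < m := Nat.pos_of_ne_zero fun h => by
      subst h
      exact zero_ne_one (ht0.symm.trans htm)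
    have ht1 : 0 < t (⟨0, hm⟩ : Fin m).succ := by simpa [ht0] using hΔ ⟨0, hm⟩
    have hcs : (⟨0, hm⟩ : Fin m).castSucc = 0 := rfl
    rw [mul_zero, hb0, mul_zero,
      hωext ⟨0, hm⟩ 0 ⟨by rw [hcs, ht0, mul_zero], mul_nonneg hq.le ht1.le⟩, hcs, ht0]
    simp only [mul_zero, sub_zero, add_zero]
    rw [min_eq_left (mul_nonneg hp.le ht1.le)]
  · obtain ⟨i, hi⟩ := Fin.exists_mem_Ioc_of_lt_of_le t (ht0 ▸ hpos) (htm ▸ hs.2)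
    rw [hωext i _ ⟨by gcongr; exact hi.1.le, by gcongr; exact hi.2⟩, hb i s hi,
      div_sub_rescaled_mul_self (hΔ i).ne' hp.ne' hq.ne', ← min_shift_eq_mul_sub_max hp]
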